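/- arXiv:math/0402311 — 3 statements merged into one kernel-verified Lean document; each statement's English description precedes it below -/
import Mathlib

section
/- For every r with |r| ≤ 1, the power mean H_r on the positive cone Γ₊ ⊂ ℝⁿ is inverse-concave: the function x ↦ -H_r(x₁⁻¹,...,xₙ⁻¹) is concave on Γ₊. -/
noncomputable section

/-- The open positive cone in `ℝⁿ`. -/
def posCone (n : ℕ) : Set (Fin n → ℝ) := {x | ∀ i, 0 < x i}

/-- The power mean `H_r`, with `H_0` the geometric mean. -/
def powerMean (n : ℕ) (r : ℝ) (x : Fin n → ℝ) : ℝ :=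
  if r = 0 then (∏ i, x i) ^ ((1 : ℝ) / n)
  else ((1 / n : ℝ) * ∑ i, x i ^ r) ^ (1 / r)

/-!
Substituting `x ↦ x⁻¹`, the function to be shown convex is `x ↦ (mean of x_i^(-r))^(1/r)` for
`r ≠ 0` and `x ↦ exp (mean of -log x_i)` for `r = 0`. Each is a one-variable function applied to
a mean of one-variable functions of the coordinates: for `0 < r ≤ 1` the inner terms `t^(-r)` are
convex and `s ↦ s^(1/r)` is convex increasing; for `-1 ≤ r < 0` the inner terms `t^(-r)` are
concave and `s ↦ s^(1/r)` is convex decreasing; for `r = 0`, `-log` is convex and `exp` is convex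
increasing.
-/

open Set Real

section Composition

variable {𝕜 E α β : Type*} [Semiring 𝕜] [PartialOrder 𝕜] [AddCommMonoid E] [SMul 𝕜 E]
  [AddCommMonoid α] [PartialOrder α] [SMul 𝕜 α] [AddCommMonoid β] [PartialOrder β] [SMul 𝕜 β]
  {s : Set E} {t : Set β} {f : E → β} {g : β → α}

theorem ConvexOn.comp_of_mapsTo (hg : ConvexOn 𝕜 t g) (hf : ConvexOn 𝕜 s f) (hst : MapsTo f s t)
    (hg' : MonotoneOn g t) : ConvexOn 𝕜 s (g ∘ f) :=
  ⟨hf.1, fun _ hx _ hy _ _ ha hb hab =>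
    (hg' (hst (hf.1 hx hy ha hb hab)) (hg.1 (hst hx) (hst hy) ha hb hab)
      (hf.2 hx hy ha hb hab)).trans (hg.2 (hst hx) (hst hy) ha hb hab)⟩

theorem ConvexOn.comp_concaveOn_of_mapsTo (hg : ConvexOn 𝕜 t g) (hf : ConcaveOn 𝕜 s f)
    (hst : MapsTo f s t) (hg' : AntitoneOn g t) : ConvexOn 𝕜 s (g ∘ f) :=
  ⟨hf.1, fun _ hx _ hy _ _ ha hb hab =>
    (hg' (hg.1 (hst hx) (hst hy) ha hb hab) (hst (hf.1 hx hy ha hb hab))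
      (hf.2 hx hy ha hb hab)).trans (hg.2 (hst hx) (hst hy) ha hb hab)⟩

end Composition

section SumCompEval

variable {𝕜 E β ι : Type*} [Semiring 𝕜] [PartialOrder 𝕜] [AddCommMonoid E] [Module 𝕜 E]
  [AddCommMonoid β] [PartialOrder β] [IsOrderedAddMonoid β] [Module 𝕜 β] [Fintype ι]
  {t : Set E} {φ : E → β}

theorem ConvexOn.sum_comp_eval (hφ : ConvexOn 𝕜 t φ) :
    ConvexOn 𝕜 (univ.pi fun _ : ι => t) fun x => ∑ i, φ (x i) := by
  have hs : Convex 𝕜 (univ.pi fun _ : ι => t) := convex_pi fun _ _ => hφ.1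
  have hcoord (i : ι) : ConvexOn 𝕜 (univ.pi fun _ : ι => t) fun x => φ (x i) :=
    (hφ.comp_linearMap (LinearMap.proj i : (ι → E) →ₗ[𝕜] E)).subset
      (fun _ hx => mem_univ_pi.mp hx i) hs
  have h := Finset.sum_induction (s := Finset.univ) (fun i (x : ι → E) => φ (x i))
    (ConvexOn 𝕜 (univ.pi fun _ : ι => t)) (fun _ _ => ConvexOn.add) (convexOn_const 0 hs)
    fun i _ => hcoord i
  simpa only [Finset.sum_fn] using h

theorem ConcaveOn.sum_comp_eval (hφ : ConcaveOn 𝕜 t φ) :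
    ConcaveOn 𝕜 (univ.pi fun _ : ι => t) fun x => ∑ i, φ (x i) :=
  hφ.dual.sum_comp_eval

end SumCompEval

theorem convexOn_rpow_of_nonpos {p : ℝ} (hp : p ≤ 0) : ConvexOn ℝ (Ioi 0) fun x : ℝ => x ^ p := by
  have hlog : ConvexOn ℝ (Ioi 0) fun x => -p • -log x :=
    strictConcaveOn_log_Ioi.concaveOn.neg.smul (neg_nonneg.mpr hp)
  refine (convexOn_exp.comp_of_mapsTo hlog (mapsTo_univ _ _) (exp_monotone.monotoneOn _)).congr ?_
  intro x hx
  simp only [Function.comp_apply, smul_eq_mul, rpow_def_of_pos hx]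
  ring_nf

theorem posCone_eq_pi (n : ℕ) : posCone n = univ.pi fun _ => Ioi 0 := by
  ext x
  simp [posCone]

theorem powerMean_zero_inv {n : ℕ} {x : Fin n → ℝ} (hx : x ∈ posCone n) :
    powerMean n 0 (fun i => (x i)⁻¹) = exp ((1 / n : ℝ) * ∑ i, -log (x i)) := by
  rw [powerMean, if_pos rfl, rpow_def_of_pos (Finset.prod_pos fun i _ => inv_pos.mpr (hx i)),
    log_prod fun i _ => (inv_pos.mpr (hx i)).ne']
  simp only [log_inv, mul_comm]

theorem powerMean_inv_of_ne_zero {n : ℕ} {r : ℝ} (hr : r ≠ 0) {x : Fin n → ℝ}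
    (hx : x ∈ posCone n) :
    powerMean n r (fun i => (x i)⁻¹) = ((1 / n : ℝ) * ∑ i, x i ^ (-r)) ^ (1 / r) := by
  simp only [powerMean, if_neg hr, inv_rpow (hx _).le, rpow_neg (hx _).le]

theorem convexOn_powerMean_inv_zero (n : ℕ) :
    ConvexOn ℝ (posCone n) fun x => powerMean n 0 fun i => (x i)⁻¹ := by
  have hmean : ConvexOn ℝ (posCone n) fun x => (1 / n : ℝ) • ∑ i, -log (x i) := by
    rw [posCone_eq_pi]
    exact strictConcaveOn_log_Ioi.concaveOn.neg.sum_comp_eval.smul (by positivity)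
  refine (convexOn_exp.comp_of_mapsTo hmean (mapsTo_univ _ _) (exp_monotone.monotoneOn _)).congr
    fun x hx => ?_
  rw [powerMean_zero_inv hx]
  rfl

theorem convexOn_powerMean_inv_of_pos {n : ℕ} {r : ℝ} (hr₀ : 0 < r) (hr₁ : r ≤ 1) :
    ConvexOn ℝ (posCone n) fun x => powerMean n r fun i => (x i)⁻¹ := by
  have hmean : ConvexOn ℝ (posCone n) fun x => (1 / n : ℝ) • ∑ i, x i ^ (-r) := by
    rw [posCone_eq_pi]
    exact (convexOn_rpow_of_nonpos (neg_nonpos.mpr hr₀.le)).sum_comp_eval.smul (by positivity)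
  have hmaps : MapsTo (fun x => (1 / n : ℝ) • ∑ i, x i ^ (-r)) (posCone n) (Ici 0) :=
    fun x hx => mem_Ici.mpr <| smul_nonneg (by positivity)
      (Finset.sum_nonneg fun i _ => (rpow_pos_of_pos (hx i) _).le)
  have hexp : 1 ≤ 1 / r := by rwa [le_div_iff₀ hr₀, one_mul]
  refine ((convexOn_rpow hexp).comp_of_mapsTo hmean hmaps
    (monotoneOn_rpow_Ici_of_exponent_nonneg (by positivity))).congr fun x hx => ?_
  rw [powerMean_inv_of_ne_zero hr₀.ne' hx]
  rfl

theorem convexOn_powerMean_inv_of_neg {n : ℕ} (hn : 0 < n) {r : ℝ} (hr₁ : -1 ≤ r) (hr₀ : r < 0) :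
    ConvexOn ℝ (posCone n) fun x => powerMean n r fun i => (x i)⁻¹ := by
  have hmean : ConcaveOn ℝ (posCone n) fun x => (1 / n : ℝ) • ∑ i, x i ^ (-r) := by
    refine ((concaveOn_rpow (by linarith) (by linarith)).sum_comp_eval.smul
      (by positivity)).subset (fun x hx => mem_univ_pi.mpr fun i => (hx i).le) ?_
    rw [posCone_eq_pi]
    exact convex_pi fun _ _ => convex_Ioi 0
  have hmaps : MapsTo (fun x => (1 / n : ℝ) • ∑ i, x i ^ (-r)) (posCone n) (Ioi 0) :=
    fun x hx => mem_Ioi.mpr <| smul_pos (by positivity) <|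
      Finset.sum_pos (fun i _ => rpow_pos_of_pos (hx i) _) ⟨⟨0, hn⟩, Finset.mem_univ _⟩
  have hexp : 1 / r ≤ 0 := div_nonpos_of_nonneg_of_nonpos zero_le_one hr₀.le
  refine ((convexOn_rpow_of_nonpos hexp).comp_concaveOn_of_mapsTo hmean hmaps
    (antitoneOn_rpow_Ioi_of_exponent_nonpos hexp)).congr fun x hx => ?_
  rw [powerMean_inv_of_ne_zero hr₀.ne hx]
  rfl

theorem stmt5 {n : ℕ} (hn : 0 < n) (r : ℝ) (hr : |r| ≤ 1) :
    ConcaveOn ℝ (posCone n) (fun x => -powerMean n r (fun i => (x i)⁻¹)) := by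
  obtain ⟨hr₁, hr₂⟩ := abs_le.mp hr
  refine ConvexOn.neg ?_
  rcases lt_trichotomy r 0 with hr₀ | rfl | hr₀
  · exact convexOn_powerMean_inv_of_neg hn hr₁ hr₀
  · exact convexOn_powerMean_inv_zero n
  · exact convexOn_powerMean_inv_of_pos hr₀ hr₂
end
end

section
/- For 0 ≤ k < n, the quotient Sₖ₊₁/Sₖ of normalized elementary symmetric polynomials is concave on the positive cone Γ₊ ⊂ ℝⁿ. -/
/-!
Write `E_k` for the unnormalized elementary symmetric functions and `q_k = E_{k+1} / E_k`; the
quotient `S_{k+1} / S_k` is a positive constant times `q_k`. As `q_k` is positively homogeneous of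
degree one, concavity on the cone amounts to superadditivity, `q_k x + q_k y ≤ q_k (x + y)`
(Marcus–Lopes), which goes by induction on `k`. With `x̂ᵢ` the vector `x` without its `i`-th
entry, Euler's identity `∑ᵢ xᵢ E_{k+1}(x̂ᵢ) = (k+2) E_{k+2}(x)` and
`E_{k+1}(x) = E_{k+1}(x̂ᵢ) + xᵢ E_k(x̂ᵢ)` give `(k+2) q_{k+1}(x) = ∑ᵢ xᵢ ∥ q_k(x̂ᵢ)`, where
`a ∥ b = ab / (a + b)` is the parallel sum; and the parallel sum of positive numbers is
superadditive and increasing in each argument.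
-/

noncomputable section

/-- The normalized `k`-th elementary symmetric polynomial. -/
def eS (n k : ℕ) (x : Fin n → ℝ) : ℝ :=
  ((n.choose k : ℝ))⁻¹ * ∑ A ∈ Finset.powersetCard k (Finset.univ : Finset (Fin n)), ∏ i ∈ A, x i

open Finset

section ParallelSum

variable {𝕜 : Type*} [Field 𝕜]

def parallelSum (a b : 𝕜) : 𝕜 := a * b / (a + b)

variable [LinearOrder 𝕜] [IsStrictOrderedRing 𝕜]

lemma parallelSum_le_parallelSum_right {a b c : 𝕜} (ha : 0 < a) (hb : 0 < b) (hbc : b ≤ c) :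
    parallelSum a b ≤ parallelSum a c := by
  have hc : 0 < c := hb.trans_le hbc
  rw [parallelSum, parallelSum, div_le_div_iff₀ (by positivity) (by positivity)]
  nlinarith [mul_le_mul_of_nonneg_left hbc (mul_pos ha ha).le]

lemma parallelSum_add_parallelSum_le {a b c d : 𝕜} (ha : 0 < a) (hb : 0 < b) (hc : 0 < c)
    (hd : 0 < d) : parallelSum a b + parallelSum c d ≤ parallelSum (a + c) (b + d) := by
  rw [parallelSum, parallelSum, parallelSum, div_add_div _ _ (by positivity) (by positivity),
    div_le_div_iff₀ (by positivity) (by positivity)]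
  nlinarith [sq_nonneg (a * d - b * c), ha.le, hb.le, hc.le, hd.le]

end ParallelSum

namespace Finset

variable {ι R : Type*}

section CommSemiring

variable [CommSemiring R]

def esymm (s : Finset ι) (k : ℕ) (x : ι → R) : R :=
  ∑ A ∈ s.powersetCard k, ∏ i ∈ A, x i

@[simp] lemma esymm_zero (s : Finset ι) (x : ι → R) : s.esymm 0 x = 1 := by
  simp [esymm]

@[simp] lemma esymm_one (s : Finset ι) (x : ι → R) : s.esymm 1 x = ∑ i ∈ s, x i := by
  simp [esymm, powersetCard_one]

lemma esymm_smul (s : Finset ι) (k : ℕ) (c : R) (x : ι → R) :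
    s.esymm k (c • x) = c ^ k * s.esymm k x := by
  rw [esymm, esymm, mul_sum]
  refine sum_congr rfl fun A hA => ?_
  simp only [Pi.smul_apply, smul_eq_mul, prod_mul_distrib, prod_const, (mem_powersetCard.1 hA).2]

variable [DecidableEq ι]

lemma filter_mem_powersetCard_succ {s : Finset ι} {i : ι} (hi : i ∈ s) (k : ℕ) :
    {B ∈ s.powersetCard (k + 1) | i ∈ B} = ((s.erase i).powersetCard k).image (insert i) := by
  ext B
  simp only [mem_filter, mem_powersetCard, mem_image, subset_erase]
  constructor
  · rintro ⟨⟨hBs, hcard⟩, hiB⟩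
    refine ⟨B.erase i, ⟨⟨(erase_subset i B).trans hBs, notMem_erase i B⟩, ?_⟩, insert_erase hiB⟩
    rw [card_erase_of_mem hiB, hcard, Nat.add_sub_cancel]
  · rintro ⟨A, ⟨⟨hAs, hiA⟩, hcard⟩, rfl⟩
    exact ⟨⟨insert_subset hi hAs, by rw [card_insert_of_notMem hiA, hcard]⟩, mem_insert_self i A⟩

lemma filter_notMem_powersetCard {s : Finset ι} (i : ι) (k : ℕ) :
    {B ∈ s.powersetCard k | i ∉ B} = (s.erase i).powersetCard k := by
  ext B
  simp only [mem_filter, mem_powersetCard, subset_erase]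
  tauto

lemma mul_esymm_erase {s : Finset ι} {i : ι} (hi : i ∈ s) (k : ℕ) (x : ι → R) :
    x i * (s.erase i).esymm k x = ∑ B ∈ s.powersetCard (k + 1) with i ∈ B, ∏ j ∈ B, x j := by
  rw [filter_mem_powersetCard_succ hi, sum_image, esymm, mul_sum]
  · refine sum_congr rfl fun A hA => ?_
    rw [prod_insert fun h => notMem_erase i s ((mem_powersetCard.1 hA).1 h)]
  · intro A hA A' hA' h
    have hiA : ∀ C ∈ (s.erase i).powersetCard k, i ∉ C := fun C hC h =>
      notMem_erase i s ((mem_powersetCard.1 hC).1 h)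
    rw [← erase_insert (hiA A hA), ← erase_insert (hiA A' hA'), h]

lemma esymm_succ_eq_esymm_erase {s : Finset ι} {i : ι} (hi : i ∈ s) (k : ℕ) (x : ι → R) :
    s.esymm (k + 1) x = (s.erase i).esymm (k + 1) x + x i * (s.erase i).esymm k x := by
  rw [mul_esymm_erase hi, esymm, esymm, ← filter_notMem_powersetCard i,
    sum_filter_not_add_sum_filter]

lemma sum_mul_esymm_erase (s : Finset ι) (k : ℕ) (x : ι → R) :
    ∑ i ∈ s, x i * (s.erase i).esymm k x = (k + 1) * s.esymm (k + 1) x := by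
  calc ∑ i ∈ s, x i * (s.erase i).esymm k x
      = ∑ i ∈ s, ∑ B ∈ s.powersetCard (k + 1), if i ∈ B then ∏ j ∈ B, x j else 0 :=
        sum_congr rfl fun i hi => by rw [mul_esymm_erase hi, sum_filter]
    _ = ∑ B ∈ s.powersetCard (k + 1), ∑ i ∈ s ∩ B, ∏ j ∈ B, x j := by
        rw [sum_comm]; simp only [sum_ite_mem]
    _ = (k + 1) * s.esymm (k + 1) x := by
        rw [esymm, mul_sum]
        refine sum_congr rfl fun B hB => ?_
        rw [mem_powersetCard] at hB
        rw [inter_eq_right.2 hB.1, sum_const, hB.2, nsmul_eq_mul]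
        push_cast; ring

end CommSemiring

section Field

variable {𝕜 : Type*} [Field 𝕜]

def esymmRatio (s : Finset ι) (k : ℕ) (x : ι → 𝕜) : 𝕜 :=
  s.esymm (k + 1) x / s.esymm k x

lemma esymmRatio_smul (s : Finset ι) (k : ℕ) (c : 𝕜) (x : ι → 𝕜) :
    s.esymmRatio k (c • x) = c * s.esymmRatio k x := by
  rw [esymmRatio, esymmRatio, esymm_smul, esymm_smul]
  rcases eq_or_ne c 0 with rfl | hc
  · simp
  · rw [pow_succ, mul_assoc, mul_div_mul_left _ _ (pow_ne_zero k hc), mul_div_assoc]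

variable [LinearOrder 𝕜] [IsStrictOrderedRing 𝕜]

lemma esymm_pos {s : Finset ι} {k : ℕ} {x : ι → 𝕜} (hk : k ≤ #s) (hx : ∀ i ∈ s, 0 < x i) :
    0 < s.esymm k x :=
  sum_pos (fun _ hA => prod_pos fun i hi => hx i ((mem_powersetCard.1 hA).1 hi))
    (powersetCard_nonempty.2 hk)

lemma esymmRatio_pos {s : Finset ι} {k : ℕ} {x : ι → 𝕜} (hk : k < #s)
    (hx : ∀ i ∈ s, 0 < x i) : 0 < s.esymmRatio k x :=
  div_pos (esymm_pos hk hx) (esymm_pos hk.le hx)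

variable [DecidableEq ι]

lemma esymmRatio_succ_eq_sum {s : Finset ι} {k : ℕ} {w : ι → 𝕜} (hk : k + 1 < #s)
    (hw : ∀ i ∈ s, 0 < w i) :
    (k + 2) * s.esymmRatio (k + 1) w =
      ∑ i ∈ s, parallelSum (w i) ((s.erase i).esymmRatio k w) := by
  have heuler : ∑ i ∈ s, w i * (s.erase i).esymm (k + 1) w = (k + 2) * s.esymm (k + 2) w := by
    rw [sum_mul_esymm_erase]; push_cast; ring
  rw [esymmRatio, mul_div_assoc', ← heuler, sum_div]
  refine sum_congr rfl fun i hi => ?_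
  have hw' : ∀ j ∈ s.erase i, 0 < w j := fun j hj => hw j (mem_of_mem_erase hj)
  have hcard : k < #(s.erase i) := by rw [card_erase_of_mem hi]; omega
  have hp := esymm_pos hcard hw'
  have hq := esymm_pos hcard.le hw'
  have hwi := hw i hi
  rw [esymm_succ_eq_esymm_erase hi, esymmRatio, parallelSum]
  field_simp
  ring

lemma esymmRatio_add_le {s : Finset ι} {k : ℕ} {x y : ι → 𝕜} (hk : k < #s)
    (hx : ∀ i ∈ s, 0 < x i) (hy : ∀ i ∈ s, 0 < y i) :
    s.esymmRatio k x + s.esymmRatio k y ≤ s.esymmRatio k (x + y) := by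
  induction k generalizing s with
  | zero => simp [esymmRatio, sum_add_distrib]
  | succ k ih =>
    have hxy : ∀ i ∈ s, 0 < (x + y) i := fun i hi => add_pos (hx i hi) (hy i hi)
    rw [← mul_le_mul_iff_right₀ (by positivity : (0 : 𝕜) < k + 2), mul_add,
      esymmRatio_succ_eq_sum hk hx, esymmRatio_succ_eq_sum hk hy, esymmRatio_succ_eq_sum hk hxy,
      ← sum_add_distrib]
    refine sum_le_sum fun i hi => ?_
    have hcard : k < #(s.erase i) := by rw [card_erase_of_mem hi]; omega
    have hx' : ∀ j ∈ s.erase i, 0 < x j := fun j hj => hx j (mem_of_mem_erase hj)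
    have hy' : ∀ j ∈ s.erase i, 0 < y j := fun j hj => hy j (mem_of_mem_erase hj)
    calc parallelSum (x i) ((s.erase i).esymmRatio k x)
          + parallelSum (y i) ((s.erase i).esymmRatio k y)
        ≤ parallelSum (x i + y i)
            ((s.erase i).esymmRatio k x + (s.erase i).esymmRatio k y) :=
          parallelSum_add_parallelSum_le (hx i hi) (esymmRatio_pos hcard hx') (hy i hi)
            (esymmRatio_pos hcard hy')
      _ ≤ parallelSum (x i + y i) ((s.erase i).esymmRatio k (x + y)) :=
          parallelSum_le_parallelSum_right (hxy i hi)
            (add_pos (esymmRatio_pos hcard hx') (esymmRatio_pos hcard hy')) (ih hcard hx' hy')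

end Field

end Finset

lemma concaveOn_of_superadditive_of_homogeneous {𝕜 E : Type*} [Field 𝕜] [LinearOrder 𝕜]
    [IsStrictOrderedRing 𝕜] [AddCommMonoid E] [Module 𝕜 E] {s : Set E} {f : E → 𝕜}
    (hs : Convex 𝕜 s) (hs_smul : ∀ x ∈ s, ∀ c : 𝕜, 0 < c → c • x ∈ s)
    (hf_smul : ∀ x ∈ s, ∀ c : 𝕜, 0 < c → f (c • x) = c * f x)
    (hf_add : ∀ x ∈ s, ∀ y ∈ s, f x + f y ≤ f (x + y)) : ConcaveOn 𝕜 s f := by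
  refine ⟨hs, fun x hx y hy a b ha hb hab => ?_⟩
  rcases ha.eq_or_lt with rfl | ha
  · obtain rfl : b = 1 := by simpa using hab
    simp
  rcases hb.eq_or_lt with rfl | hb
  · obtain rfl : a = 1 := by simpa using hab
    simp
  rw [smul_eq_mul, smul_eq_mul, ← hf_smul x hx a ha, ← hf_smul y hy b hb]
  exact hf_add _ (hs_smul x hx a ha) _ (hs_smul y hy b hb)

lemma convex_posCone (n : ℕ) : Convex ℝ (posCone n) :=
  fun _ hx _ hy _ _ ha hb hab i => convex_Ioi (0 : ℝ) (hx i) (hy i) ha hb hab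

lemma smul_mem_posCone {n : ℕ} {x : Fin n → ℝ} (hx : x ∈ posCone n) {c : ℝ} (hc : 0 < c) :
    c • x ∈ posCone n :=
  fun i => mul_pos hc (hx i)

lemma eS_succ_div_eS {n k : ℕ} (hk : k ≤ n) (x : Fin n → ℝ) :
    eS n (k + 1) x / eS n k x = (n.choose k / n.choose (k + 1) : ℝ) * univ.esymmRatio k x := by
  have : (n.choose k : ℝ) ≠ 0 := by exact_mod_cast (Nat.choose_pos hk).ne'
  simp only [eS, esymmRatio, esymm]
  field_simp

theorem stmt7 {n k : ℕ} (hk : k < n) :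
    ConcaveOn ℝ (posCone n) (fun x => eS n (k + 1) x / eS n k x) := by
  simp_rw [eS_succ_div_eS hk.le]
  refine ConcaveOn.smul (by positivity) (concaveOn_of_superadditive_of_homogeneous
    (convex_posCone n) (fun x hx c hc => smul_mem_posCone hx hc)
    (fun x _ c _ => esymmRatio_smul univ k c x) (fun x hx y hy => ?_))
  exact esymmRatio_add_le (by simpa using hk) (fun i _ => hx i) (fun i _ => hy i)
end
end

section
/- Let f be a smooth symmetric, strictly monotone increasing, concave and inverse-concave function on Γ₊ ⊂ ℝⁿ with derivative ḟ. Then for any λ₁ < λₖ, λₗ (all positive) with k ≠ l and any ε ∈ (0,1), the quantity (1-ε)·((ḟ^k - ḟ^l)/(λₖ-λₗ) + ḟ^k/(λₗ-λ₁) + ḟ^l/(λₖ-λ₁)) + ε·(ḟ^k/(λₗ-λ₁) + ḟ^l/(λₖ-λ₁) - (ḟ^k-ḟ^1)/(λₖ-λ₁) - (ḟ^l-ḟ^1)/(λₗ-λ₁)) is non-negative, where ḟ^i denotes ∂f/∂xᵢ evaluated at (λ₁,...,λₙ) ∈ Γ₊ with λ₁ the smallest entry and λₖ ≠ λₗ.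 -/
noncomputable section

/-- Coordinatewise inversion. -/
def invPt {n : ℕ} (x : Fin n → ℝ) : Fin n → ℝ := fun i => (x i)⁻¹

open Filter Set Topology
lemma posCone_isOpen (n : ℕ) : IsOpen (posCone n) := by
  have h : posCone n = ⋂ i, {x : Fin n → ℝ | 0 < x i} := by
    ext x; simp [posCone, Set.mem_iInter]
  rw [h]
  exact isOpen_iInter_of_finite fun i => isOpen_lt continuous_const (continuous_apply i)

lemma concave_dir {n : ℕ} {F : (Fin n → ℝ) → ℝ} {s : Set (Fin n → ℝ)}
    (hF : ConcaveOn ℝ s F) {x y : Fin n → ℝ} (hx : x ∈ s) (hy : y ∈ s)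
    (heq : F y = F x) (hd : DifferentiableAt ℝ F x) :
    0 ≤ fderiv ℝ F x (y - x) := by
  set φ : ℝ → ℝ := fun t => F (x + t • (y - x)) with hφdef
  have hline : HasDerivAt (fun t : ℝ => x + t • (y - x)) (y - x) 0 := by
    simpa using ((hasDerivAt_id (0:ℝ)).smul_const (y - x)).const_add x
  have h2 : HasFDerivAt F (fderiv ℝ F x) (x + (0:ℝ) • (y - x)) := by
    simpa using hd.hasFDerivAt
  have hφ : HasDerivAt φ (fderiv ℝ F x (y - x)) 0 := by
    exact h2.comp_hasDerivAt 0 hline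
  have hslope : ∀ t ∈ Ioc (0:ℝ) 1, 0 ≤ slope φ 0 t := by
    intro t ht
    have hpt : x + t • (y - x) = (1 - t) • x + t • y := by
      rw [smul_sub, sub_smul, one_smul]; abel
    have h3 := hF.2 hx hy (by linarith [ht.2] : (0:ℝ) ≤ 1 - t) (le_of_lt ht.1) (by ring)
    rw [← hpt, heq] at h3
    have h1 : (1 - t) * F x + t * F x = F x := by ring
    rw [smul_eq_mul, smul_eq_mul, h1] at h3
    have h4 : φ 0 ≤ φ t := by simpa [hφdef] using h3
    rw [slope_def_field, sub_zero]
    exact div_nonneg (by linarith) (le_of_lt ht.1)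
  have htend : Tendsto (slope φ 0) (𝓝[>] 0) (𝓝 (fderiv ℝ F x (y - x))) := by
    have := hasDerivAt_iff_tendsto_slope.1 hφ
    exact this.mono_left (nhdsWithin_mono 0 (fun t ht => ne_of_gt ht))
  refine ge_of_tendsto htend ?_
  filter_upwards [Ioc_mem_nhdsGT_of_mem (by constructor <;> norm_num : (0:ℝ) ∈ Ico (0:ℝ) 1)] with t ht
  exact hslope t ht

lemma swap_sub {n : ℕ} (x : Fin n → ℝ) {a b : Fin n} (hab : a ≠ b) :
    (x ∘ Equiv.swap a b) - x
      = (x b - x a) • (Pi.single a 1 : Fin n → ℝ) + (x a - x b) • (Pi.single b 1 : Fin n → ℝ) := by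
  funext j
  simp only [Pi.sub_apply, Pi.add_apply, Pi.smul_apply, Function.comp_apply, smul_eq_mul]
  by_cases hja : j = a
  · subst hja
    rw [Equiv.swap_apply_left, Pi.single_eq_same, Pi.single_eq_of_ne hab]
    ring
  · by_cases hjb : j = b
    · subst hjb
      rw [Equiv.swap_apply_right, Pi.single_eq_same, Pi.single_eq_of_ne (Ne.symm hab)]
      ring
    · rw [Equiv.swap_apply_of_ne_of_ne hja hjb, Pi.single_eq_of_ne hja, Pi.single_eq_of_ne hjb]
      ring

lemma arith_final (A B C p q r ε : ℝ) (hr : 0 < r) (hp : r < p) (hq : r < q)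
    (hpq : p ≠ q) (hA : 0 < A) (hB : 0 < B) (hAC : A ≤ C) (hBC : B ≤ C)
    (H : 0 ≤ (p - q) * (p^2*A - q^2*B)) (hε0 : 0 < ε) (hε1 : ε < 1) :
    0 ≤ (1-ε) * ((A - B)/(p - q) + A/(q - r) + B/(p - r))
      + ε * (A/(q-r) + B/(p-r) - (A - C)/(p - r) - (B - C)/(q - r)) := by
  have hp0 : 0 < p := hr.trans hp
  have hq0 : 0 < q := hr.trans hq
  have hqr : 0 < q - r := by linarith
  have hpr : 0 < p - r := by linarith
  have hpq0 : p - q ≠ 0 := sub_ne_zero.2 hpq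
  have hsq : 0 < (p - q)^2 := by
    have := pow_pos (abs_pos.2 hpq0) 2
    rwa [sq_abs] at this
  have hE : (A - B)/(p - q) + A/q + B/p
      = ((p - q) * (p^2*A - q^2*B)) / ((p - q)^2 * p * q) := by
    field_simp
    ring
  have hE0 : 0 ≤ (A - B)/(p - q) + A/q + B/p := by
    rw [hE]
    exact div_nonneg H (by positivity)
  have h1 : A / q ≤ A / (q - r) := by
    exact div_le_div_of_nonneg_left hA.le hqr (by linarith)
  have h2 : B / p ≤ B / (p - r) := by
    exact div_le_div_of_nonneg_left hB.le hpr (by linarith)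
  have hT1 : 0 ≤ (A - B)/(p - q) + A/(q - r) + B/(p - r) := by linarith
  have h3 : (A - C)/(p - r) ≤ 0 := div_nonpos_of_nonpos_of_nonneg (by linarith) hpr.le
  have h4 : (B - C)/(q - r) ≤ 0 := div_nonpos_of_nonpos_of_nonneg (by linarith) hqr.le
  have h5 : 0 ≤ A/(q-r) := div_nonneg hA.le hqr.le
  have h6 : 0 ≤ B/(p-r) := div_nonneg hB.le hpr.le
  have hT2 : 0 ≤ A/(q-r) + B/(p-r) - (A - C)/(p - r) - (B - C)/(q - r) := by linarith
  have m1 := mul_nonneg (by linarith : (0:ℝ) ≤ 1 - ε) hT1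
  have m2 := mul_nonneg hε0.le hT2
  linarith

theorem stmt19 {n : ℕ} (f : (Fin n → ℝ) → ℝ)
    (hsm : ContDiffOn ℝ (⊤ : ℕ∞) f (posCone n))
    (hsym : ∀ σ : Equiv.Perm (Fin n), ∀ x ∈ posCone n, f (x ∘ σ) = f x)
    (hmono : ∀ x ∈ posCone n, ∀ i, 0 < fderiv ℝ f x (Pi.single i 1))
    (hconc : ConcaveOn ℝ (posCone n) f)
    (hinv : ConcaveOn ℝ (posCone n) (fun x => -f (invPt x)))
    (lam : Fin n → ℝ) (hlam : lam ∈ posCone n) (hdist : Function.Injective lam)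
    (i₁ : Fin n) (hmin : ∀ i, lam i₁ ≤ lam i)
    (k l : Fin n) (hkl : k ≠ l) (hk1 : lam i₁ < lam k) (hl1 : lam i₁ < lam l)
    (ε : ℝ) (hε : ε ∈ Set.Ioo (0 : ℝ) 1) :
    0 ≤ (1 - ε) *
          ((fderiv ℝ f lam (Pi.single k 1) - fderiv ℝ f lam (Pi.single l 1))
              / (lam k - lam l)
            + fderiv ℝ f lam (Pi.single k 1) / (lam l - lam i₁)
            + fderiv ℝ f lam (Pi.single l 1) / (lam k - lam i₁))
      + ε *
          (fderiv ℝ f lam (Pi.single k 1) / (lam l - lam i₁)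
            + fderiv ℝ f lam (Pi.single l 1) / (lam k - lam i₁)
            - (fderiv ℝ f lam (Pi.single k 1) - fderiv ℝ f lam (Pi.single i₁ 1))
                / (lam k - lam i₁)
            - (fderiv ℝ f lam (Pi.single l 1) - fderiv ℝ f lam (Pi.single i₁ 1))
                / (lam l - lam i₁)) := by
  
  obtain ⟨hε0, hε1⟩ := hε
  have hopen := posCone_isOpen n
  have hdf : DifferentiableAt ℝ f lam :=
    (hsm.contDiffAt (hopen.mem_nhds hlam)).differentiableAt (by simp)
  have hApos : 0 < fderiv ℝ f lam (Pi.single k 1) := hmono lam hlam k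
  have hBpos : 0 < fderiv ℝ f lam (Pi.single l 1) := hmono lam hlam l
  have hk1' : k ≠ i₁ := fun h => by rw [h] at hk1; exact lt_irrefl _ hk1
  have hl1' : l ≠ i₁ := fun h => by rw [h] at hl1; exact lt_irrefl _ hl1
  have hpq : lam k ≠ lam l := fun h => hkl (hdist h)
  -- Step 1: concavity ⇒ derivative at larger eigenvalue is smaller
  have key1 : ∀ a : Fin n, a ≠ i₁ → lam i₁ < lam a →
      fderiv ℝ f lam (Pi.single a 1) ≤ fderiv ℝ f lam (Pi.single i₁ 1) := by
    intro a ha hlt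
    have hy : (lam ∘ Equiv.swap a i₁) ∈ posCone n := fun i => hlam _
    have heq : f (lam ∘ Equiv.swap a i₁) = f lam := hsym _ lam hlam
    have h := concave_dir hconc hlam hy heq hdf
    rw [swap_sub lam ha, map_add, map_smul, map_smul, smul_eq_mul, smul_eq_mul] at h
    nlinarith [h, hlt]
  have hAC := key1 k hk1' hk1
  have hBC := key1 l hl1' hl1
  -- Step 2: inverse concavity at μ = invPt lam
  have hμ : invPt lam ∈ posCone n := fun i => by
    simpa [invPt] using inv_pos.2 (hlam i)
  have hinvμ : invPt (invPt lam) = lam := by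
    funext i; simp [invPt]
  set μ : Fin n → ℝ := invPt lam with hμdef
  have hμk : μ k = (lam k)⁻¹ := rfl
  have hμl : μ l = (lam l)⁻¹ := rfl
  set D : (Fin n → ℝ) →L[ℝ] (Fin n → ℝ) :=
    ContinuousLinearMap.pi (fun i => (-((μ i)^2)⁻¹) • ContinuousLinearMap.proj i) with hDdef
  have hD : HasFDerivAt invPt D μ := by
    rw [hDdef]
    apply hasFDerivAt_pi''
    intro i
    rw [ContinuousLinearMap.proj_pi]
    exact (hasDerivAt_inv (ne_of_gt (hμ i))).comp_hasFDerivAt μ (hasFDerivAt_apply i μ)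
  have hfμ : HasFDerivAt f (fderiv ℝ f lam) (invPt μ) := by
    rw [hμdef, hinvμ]; exact hdf.hasFDerivAt
  have hg : HasFDerivAt (fun x => -f (invPt x)) (-((fderiv ℝ f lam).comp D)) μ :=
    (hfμ.comp μ hD).neg
  have hswap : (μ ∘ Equiv.swap k l) ∈ posCone n := fun i => hμ _
  have hgy : (fun x => -f (invPt x)) (μ ∘ Equiv.swap k l) = (fun x => -f (invPt x)) μ := by
    have h1 : invPt (μ ∘ Equiv.swap k l) = lam ∘ Equiv.swap k l := by
      funext i
      simp [invPt, hμdef]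
    simp only []
    rw [h1, hμdef, hinvμ, hsym _ lam hlam]
  have h2 := concave_dir hinv hμ hswap hgy hg.differentiableAt
  rw [hg.fderiv, swap_sub μ hkl] at h2
  have hDk : ∀ a : Fin n, D (Pi.single a 1) = (-((μ a)^2)⁻¹) • (Pi.single a 1 : Fin n → ℝ) := by
    intro a
    funext j
    rw [hDdef]
    by_cases hja : j = a
    · subst hja
      simp [ContinuousLinearMap.pi_apply]
    · simp [ContinuousLinearMap.pi_apply, Pi.single_eq_of_ne hja]
  have hsq : ∀ a : Fin n, ((μ a)^2)⁻¹ = (lam a)^2 := by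
    intro a
    have : μ a = (lam a)⁻¹ := rfl
    rw [this, inv_pow, inv_inv]
  have h3 : (-(((fderiv ℝ f lam)).comp D))
        ((μ l - μ k) • (Pi.single k 1 : Fin n → ℝ) + (μ k - μ l) • (Pi.single l 1 : Fin n → ℝ))
      = (μ l - μ k) * ((lam k)^2) * fderiv ℝ f lam (Pi.single k 1)
        + (μ k - μ l) * ((lam l)^2) * fderiv ℝ f lam (Pi.single l 1) := by
    rw [ContinuousLinearMap.neg_apply, ContinuousLinearMap.comp_apply, map_add, map_smul, map_smul,
      hDk k, hDk l, hsq k, hsq l]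
    simp only [map_add, map_smul, smul_eq_mul, smul_smul]
    ring
  rw [h3] at h2
  -- convert to polynomial form
  have hpk : (0:ℝ) < lam k := hlam k
  have hpl : (0:ℝ) < lam l := hlam l
  have H : 0 ≤ (lam k - lam l) * ((lam k)^2 * fderiv ℝ f lam (Pi.single k 1)
      - (lam l)^2 * fderiv ℝ f lam (Pi.single l 1)) := by
    rw [hμk, hμl] at h2
    have hkne : lam k ≠ 0 := ne_of_gt hpk
    have hlne : lam l ≠ 0 := ne_of_gt hpl
    have hrw : ((lam l)⁻¹ - (lam k)⁻¹) * ((lam k)^2) * fderiv ℝ f lam (Pi.single k 1)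
        + ((lam k)⁻¹ - (lam l)⁻¹) * ((lam l)^2) * fderiv ℝ f lam (Pi.single l 1)
        = ((lam k - lam l) * ((lam k)^2 * fderiv ℝ f lam (Pi.single k 1)
            - (lam l)^2 * fderiv ℝ f lam (Pi.single l 1))) / (lam k * lam l) := by
      field_simp
      ring
    rw [hrw] at h2
    have := mul_nonneg h2 (le_of_lt (mul_pos hpk hpl))
    rwa [div_mul_cancel₀] at this
    exact ne_of_gt (mul_pos hpk hpl)
  exact arith_final _ _ _ _ _ _ _ (hlam i₁) hk1 hl1 hpq hApos hBpos hAC hBC H hε0 hε1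
end
end
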